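/- Let G be a connected simple graph with n vertices and m edges. Then BH(G) ≥ 16nm⁴/(2m + M_1(G))³, with equality if and only if G is the complete graph K_n. -/

import Mathlib

/-!
Let `λ₂, …, λₙ` be the positive Laplacian eigenvalues. The traces of `L` and `L²` give
`∑ λᵢ = 2m` and `∑ λᵢ² = 2m + M₁`, so the bound reads `(∑ λᵢ)⁴ ≤ (∑ λᵢ⁻²) (∑ λᵢ²)³`, which is the
product of the squared Cauchy–Schwarz inequality `(∑ λᵢ)² ≤ (n - 1) ∑ λᵢ²` with
`(n - 1)² ≤ ∑ λᵢ⁻² ∑ λᵢ²`. Equality forces all `λᵢ` to equal some `c`, hence `L² = c L`. The entry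
of `L²` at two distinct non-adjacent vertices counts their common neighbours, so there are none,
and a connected graph in which any two vertices with a common neighbour are adjacent is complete.
Conversely, for `Kₙ` the degrees `n - 1` make the first Cauchy–Schwarz inequality an equality.
-/

open Finset Polynomial

/-- The eigenvalues of the Laplacian matrix of `G` over `ℝ`, as produced (in no
particular order) by the spectral theorem for symmetric matrices. -/
noncomputable def lapEigsUnordered {V : Type*} [Fintype V] [DecidableEq V]
    (G : SimpleGraph V) [DecidableRel G.Adj] : V → ℝ :=
  (SimpleGraph.posSemidef_lapMatrix (R := ℝ) (G := G)).1.eigenvalues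

/-- `μ : Fin n → ℝ` lists the eigenvalues of the Laplacian matrix of `G`
in nondecreasing order (so, `0`-based, `μ ⟨0,_⟩ = λ₁ ≤ μ ⟨1,_⟩ = λ₂ ≤ ⋯`). -/
def IsLapEigSeq {V : Type*} [Fintype V] [DecidableEq V] (G : SimpleGraph V)
    [DecidableRel G.Adj] {n : ℕ} (μ : Fin n → ℝ) : Prop :=
  Monotone μ ∧ ∃ e : V ≃ Fin n, ∀ v, lapEigsUnordered G v = μ (e v)

section SumInequalities

variable {ι : Type*} (s : Finset ι) (x : ι → ℝ)

theorem sum_sum_sub_sq :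
    ∑ i ∈ s, ∑ j ∈ s, (x i - x j) ^ 2 = 2 * (#s * ∑ i ∈ s, x i ^ 2 - (∑ i ∈ s, x i) ^ 2) := by
  simp only [sub_sq, sum_add_distrib, sum_sub_distrib, sum_const, nsmul_eq_mul, mul_assoc,
    ← mul_sum, ← sum_mul]
  ring

theorem eq_of_sq_sum_eq_card_mul_sum_sq (h : (∑ i ∈ s, x i) ^ 2 = #s * ∑ i ∈ s, x i ^ 2) :
    ∀ i ∈ s, ∀ j ∈ s, x i = x j := by
  have hzero : ∑ i ∈ s, ∑ j ∈ s, (x i - x j) ^ 2 = 0 := by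
    rw [sum_sum_sub_sq, h, sub_self, mul_zero]
  intro i hi j hj
  have hi' := (sum_eq_zero_iff_of_nonneg fun i _ => sum_nonneg fun j _ => sq_nonneg (x i - x j)).1
    hzero i hi
  have := (sum_eq_zero_iff_of_nonneg fun j _ => sq_nonneg (x i - x j)).1 hi' j hj
  exact sub_eq_zero.1 (pow_eq_zero_iff two_ne_zero |>.1 this)

variable {s x}

theorem card_sq_le_sum_one_div_sq_mul_sum_sq (hx : ∀ i ∈ s, x i ≠ 0) :
    (#s : ℝ) ^ 2 ≤ (∑ i ∈ s, 1 / x i ^ 2) * ∑ i ∈ s, x i ^ 2 := by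
  have hcard : ∑ i ∈ s, 1 / x i * x i = #s := by
    rw [sum_congr rfl fun i hi => one_div_mul_cancel (hx i hi)]
    simp
  simpa only [hcard, div_pow, one_pow] using sum_mul_sq_le_sq_mul_sq s (fun i => 1 / x i) x

theorem sq_card_mul_sum_sq_le_sum_one_div_sq_mul_sum_sq_pow_three (hx : ∀ i ∈ s, x i ≠ 0) :
    (#s * ∑ i ∈ s, x i ^ 2) ^ 2 ≤ (∑ i ∈ s, 1 / x i ^ 2) * (∑ i ∈ s, x i ^ 2) ^ 3 :=
  calc (#s * ∑ i ∈ s, x i ^ 2) ^ 2 = (#s : ℝ) ^ 2 * (∑ i ∈ s, x i ^ 2) ^ 2 := by ring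
    _ ≤ (∑ i ∈ s, 1 / x i ^ 2) * (∑ i ∈ s, x i ^ 2) * (∑ i ∈ s, x i ^ 2) ^ 2 := by
      gcongr
      exact card_sq_le_sum_one_div_sq_mul_sum_sq hx
    _ = _ := by ring

theorem pow_four_sum_le_sum_one_div_sq_mul_sum_sq_pow_three (hx : ∀ i ∈ s, x i ≠ 0) :
    (∑ i ∈ s, x i) ^ 4 ≤ (∑ i ∈ s, 1 / x i ^ 2) * (∑ i ∈ s, x i ^ 2) ^ 3 :=
  calc (∑ i ∈ s, x i) ^ 4 = ((∑ i ∈ s, x i) ^ 2) ^ 2 := by ring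
    _ ≤ (#s * ∑ i ∈ s, x i ^ 2) ^ 2 := by gcongr; exact sq_sum_le_card_mul_sum_sq
    _ ≤ _ := sq_card_mul_sum_sq_le_sum_one_div_sq_mul_sum_sq_pow_three hx

theorem pow_four_sum_eq_sum_one_div_sq_mul_sum_sq_pow_three_iff (hx : ∀ i ∈ s, x i ≠ 0) :
    (∑ i ∈ s, x i) ^ 4 = (∑ i ∈ s, 1 / x i ^ 2) * (∑ i ∈ s, x i ^ 2) ^ 3 ↔
      ∀ i ∈ s, ∀ j ∈ s, x i = x j := by
  constructor
  · intro h
    have hle : (∑ i ∈ s, x i) ^ 2 ≤ #s * ∑ i ∈ s, x i ^ 2 := sq_sum_le_card_mul_sum_sq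
    have hsq : ((∑ i ∈ s, x i) ^ 2) ^ 2 = (#s * ∑ i ∈ s, x i ^ 2) ^ 2 :=
      le_antisymm (by gcongr) <|
        (sq_card_mul_sum_sq_le_sum_one_div_sq_mul_sum_sq_pow_three hx).trans_eq (by rw [← h]; ring)
    exact eq_of_sq_sum_eq_card_mul_sum_sq s x <|
      (pow_left_inj₀ (sq_nonneg _) ((sq_nonneg _).trans hle) two_ne_zero).1 hsq
  · intro h
    rcases s.eq_empty_or_nonempty with rfl | ⟨i₀, hi₀⟩
    · simp
    have hconst : ∀ f : ℝ → ℝ, ∑ i ∈ s, f (x i) = #s * f (x i₀) := fun f => by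
      rw [sum_congr rfl fun i hi => by rw [h i hi i₀ hi₀], sum_const, nsmul_eq_mul]
    have := hx i₀ hi₀
    rw [hconst (fun t => t), hconst (fun t => 1 / t ^ 2), hconst (fun t => t ^ 2)]
    field_simp

end SumInequalities

namespace Matrix.IsHermitian

variable {𝕜 m : Type*} [RCLike 𝕜] [Fintype m] [DecidableEq m] {A : Matrix m m 𝕜}

theorem trace_mul_self_eq_sum_eigenvalues_sq (hA : A.IsHermitian) :
    (A * A).trace = ∑ i, ((hA.eigenvalues i ^ 2 : ℝ) : 𝕜) := by
  conv_lhs => rw [hA.spectral_theorem, ← map_mul, diagonal_mul_diagonal]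
  rw [Unitary.conjStarAlgAut_apply, trace_mul_cycle, Unitary.coe_star_mul_self, one_mul,
    trace_diagonal]
  simp [sq]

theorem mul_self_eq_smul_of_eigenvalues (hA : A.IsHermitian) {c : ℝ}
    (h : ∀ i, hA.eigenvalues i = 0 ∨ hA.eigenvalues i = c) : A * A = (c : 𝕜) • A := by
  set D : Matrix m m 𝕜 := diagonal (RCLike.ofReal ∘ hA.eigenvalues)
  have hD : D * D = (c : 𝕜) • D := by
    rw [diagonal_mul_diagonal, ← diagonal_smul]
    congr 1
    ext i
    rcases h i with hi | hi <;> simp [hi]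
  rw [hA.spectral_theorem, ← map_mul, hD, map_smul]

end Matrix.IsHermitian

namespace SimpleGraph

theorem Connected.eq_top_of_adj_trans {V : Type*} {G : SimpleGraph V} (hG : G.Connected)
    (h : ∀ u v w, G.Adj u v → G.Adj v w → u ≠ w → G.Adj u w) : G = ⊤ := by
  have key : ∀ u w (p : G.Walk u w), u ≠ w → G.Adj u w := by
    intro u w p
    induction p with
    | nil => exact fun hne => absurd rfl hne
    | @cons u v w huv p ih =>
      intro huw
      by_cases hvw : v = w
      · exact hvw ▸ huv
      · exact h u v w huv (ih hvw) huw
  ext u w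
  exact ⟨G.ne_of_adj, key u w (hG.preconnected u w).some⟩

variable {V : Type*} (R : Type*) [Fintype V] [DecidableEq V] (G : SimpleGraph V)
  [DecidableRel G.Adj]

section Ring

variable [Ring R]

theorem lapMatrix_apply_self (v : V) : G.lapMatrix R v v = G.degree v := by
  simp [lapMatrix, degMatrix]

variable {G} in
theorem lapMatrix_apply_of_adj {u v : V} (h : G.Adj u v) : G.lapMatrix R u v = -1 := by
  simp [lapMatrix, degMatrix, h.ne, h]

variable {G} in
theorem lapMatrix_apply_of_not_adj {u v : V} (hne : u ≠ v) (h : ¬G.Adj u v) :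
    G.lapMatrix R u v = 0 := by
  simp [lapMatrix, degMatrix, hne, h]

theorem lapMatrix_mul_apply (M : Matrix V V R) (v w : V) :
    (G.lapMatrix R * M) v w = G.degree v * M v w - ∑ u ∈ G.neighborFinset v, M u w := by
  simp [lapMatrix, degMatrix, Matrix.sub_mul]

theorem lapMatrix_mul_self_apply_self (v : V) :
    (G.lapMatrix R * G.lapMatrix R) v v = (G.degree v : R) ^ 2 + G.degree v := by
  rw [lapMatrix_mul_apply, lapMatrix_apply_self,
    sum_congr rfl fun u hu => lapMatrix_apply_of_adj R ((G.mem_neighborFinset v u).1 hu).symm]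
  simp [sq, sub_eq_add_neg]

theorem lapMatrix_mul_self_apply_of_not_adj {v w : V} (hne : v ≠ w) (h : ¬G.Adj v w) :
    (G.lapMatrix R * G.lapMatrix R) v w = #{u ∈ G.neighborFinset v | G.Adj u w} := by
  rw [lapMatrix_mul_apply, lapMatrix_apply_of_not_adj R hne h, mul_zero, zero_sub,
    natCast_card_filter, ← sum_neg_distrib]
  refine sum_congr rfl fun u hu => ?_
  have huw : u ≠ w := fun huw => h (huw ▸ (G.mem_neighborFinset v u).1 hu)
  by_cases hadj : G.Adj u w
  · simp [hadj, lapMatrix_apply_of_adj R hadj]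
  · simp [hadj, lapMatrix_apply_of_not_adj R huw hadj]

theorem trace_lapMatrix : (G.lapMatrix R).trace = ∑ v, (G.degree v : R) :=
  sum_congr rfl fun v _ => G.lapMatrix_apply_self R v

theorem trace_lapMatrix_mul_self :
    (G.lapMatrix R * G.lapMatrix R).trace = ∑ v, ((G.degree v : R) ^ 2 + G.degree v) :=
  sum_congr rfl fun v _ => G.lapMatrix_mul_self_apply_self R v

end Ring

theorem eq_top_of_lapMatrix_mul_self_eq_smul [Ring R] [CharZero R] (hG : G.Connected) {c : R}
    (h : G.lapMatrix R * G.lapMatrix R = c • G.lapMatrix R) : G = ⊤ := by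
  refine hG.eq_top_of_adj_trans fun u v w huv hvw huw => ?_
  by_contra hnadj
  have hzero := G.lapMatrix_mul_self_apply_of_not_adj R huw hnadj
  rw [h, Matrix.smul_apply, lapMatrix_apply_of_not_adj R huw hnadj, smul_zero, eq_comm,
    Nat.cast_eq_zero, card_eq_zero, filter_eq_empty_iff] at hzero
  exact hzero ((G.mem_neighborFinset u v).2 huv) hvw

end SimpleGraph

section LaplacianSpectrum

variable {V : Type*} [Fintype V] [DecidableEq V] (G : SimpleGraph V) [DecidableRel G.Adj]

theorem sum_lapEigsUnordered : ∑ v, lapEigsUnordered G v = ∑ v, (G.degree v : ℝ) := by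
  rw [← G.trace_lapMatrix ℝ, (G.posSemidef_lapMatrix ℝ).1.trace_eq_sum_eigenvalues]
  rfl

theorem sum_lapEigsUnordered_sq :
    ∑ v, lapEigsUnordered G v ^ 2 = ∑ v, ((G.degree v : ℝ) ^ 2 + G.degree v) := by
  rw [← G.trace_lapMatrix_mul_self ℝ,
    (G.posSemidef_lapMatrix ℝ).1.trace_mul_self_eq_sum_eigenvalues_sq]
  rfl

variable {G}

theorem eq_top_of_lapEigsUnordered_eq_zero_or_eq (hG : G.Connected) {c : ℝ}
    (h : ∀ v, lapEigsUnordered G v = 0 ∨ lapEigsUnordered G v = c) : G = ⊤ :=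
  G.eq_top_of_lapMatrix_mul_self_eq_smul ℝ hG
    ((G.posSemidef_lapMatrix ℝ).1.mul_self_eq_smul_of_eigenvalues h)

theorem IsLapEigSeq.sum_filter_pos {n : ℕ} {μ : Fin n → ℝ} (hμ : IsLapEigSeq G μ)
    (hμ0 : ∀ i : Fin n, i.val = 0 → μ i = 0) {f : ℝ → ℝ} (hf : f 0 = 0) :
    ∑ i ∈ univ.filter (fun i : Fin n => 0 < i.val), f (μ i) = ∑ v, f (lapEigsUnordered G v) := by
  obtain ⟨-, e, he⟩ := hμ
  rw [sum_filter_of_ne fun i _ hi => Nat.pos_of_ne_zero fun h0 => hi (by rw [hμ0 i h0, hf])]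
  simp_rw [he]
  exact (e.sum_comp (f ∘ μ)).symm

theorem IsLapEigSeq.eq_top_iff {n : ℕ} {μ : Fin n → ℝ} (hG : G.Connected)
    (hμ : IsLapEigSeq G μ) (hμ0 : ∀ i : Fin n, i.val = 0 → μ i = 0) :
    G = ⊤ ↔ ∀ i ∈ univ.filter (fun i : Fin n => 0 < i.val),
      ∀ j ∈ univ.filter (fun i : Fin n => 0 < i.val), μ i = μ j := by
  set s := univ.filter (fun i : Fin n => 0 < i.val)
  constructor
  · rintro rfl
    have hV : Fintype.card V = n := by
      obtain ⟨-, e, -⟩ := hμ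
      rw [Fintype.card_congr e, Fintype.card_fin]
    have hdeg : ∀ v, ((⊤ : SimpleGraph V).degree v : ℝ) = (n - 1 : ℕ) := fun v => by
      rw [← hV]
      convert congrArg Nat.cast (SimpleGraph.complete_graph_degree v)
    have hcard : #s = n - 1 := by
      rcases n with _ | n
      · simp [s]
      · rw [card_filter, Fin.sum_univ_succ]; simp
    apply eq_of_sq_sum_eq_card_mul_sum_sq
    rw [hμ.sum_filter_pos hμ0 (f := fun t => t) rfl, hμ.sum_filter_pos hμ0 (f := fun t => t ^ 2)
      (zero_pow two_ne_zero), sum_lapEigsUnordered, sum_lapEigsUnordered_sq, hcard]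
    simp only [hdeg, sum_const, card_univ, hV, nsmul_eq_mul]
    rcases n with _ | n
    · simp
    · push_cast
      ring
  · intro h
    obtain ⟨c, hc⟩ : ∃ c, ∀ i ∈ s, μ i = c := by
      rcases s.eq_empty_or_nonempty with hs | ⟨i₀, hi₀⟩
      · exact ⟨0, by simp [hs]⟩
      · exact ⟨μ i₀, fun i hi => h i hi i₀ hi₀⟩
    obtain ⟨-, e, he⟩ := hμ
    refine eq_top_of_lapEigsUnordered_eq_zero_or_eq hG (c := c) fun v => ?_
    rw [he]
    rcases Nat.eq_zero_or_pos (e v).val with h0 | hpos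
    · exact Or.inl (hμ0 _ h0)
    · exact Or.inr (hc _ (by simpa [s] using hpos))

end LaplacianSpectrum

theorem statement_3 {n : ℕ} (hn : 2 ≤ n) (G : SimpleGraph (Fin n)) [DecidableRel G.Adj]
    (hG : G.Connected) (μ : Fin n → ℝ) (hμ : IsLapEigSeq G μ)
    (hμ1 : μ ⟨0, by omega⟩ = 0) (hμ2 : 0 < μ ⟨1, by omega⟩) :
    (n : ℝ) * ∑ i ∈ univ.filter (fun i : Fin n => 0 < i.val), 1 / μ i ^ 2 ≥ 16 * (n : ℝ) * (G.edgeFinset.card : ℝ) ^ 4 / (2 * (G.edgeFinset.card : ℝ) + ∑ v, ((G.degree v : ℝ)) ^ 2) ^ 3 ∧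
    ((n : ℝ) * ∑ i ∈ univ.filter (fun i : Fin n => 0 < i.val), 1 / μ i ^ 2 = 16 * (n : ℝ) * (G.edgeFinset.card : ℝ) ^ 4 / (2 * (G.edgeFinset.card : ℝ) + ∑ v, ((G.degree v : ℝ)) ^ 2) ^ 3 ↔ G = ⊤) := by
  set s := univ.filter (fun i : Fin n => 0 < i.val)
  set m : ℝ := (G.edgeFinset.card : ℝ)
  set M : ℝ := 2 * m + ∑ v, (G.degree v : ℝ) ^ 2
  have hμ0 : ∀ i : Fin n, i.val = 0 → μ i = 0 := fun i hi => (congrArg μ (Fin.ext hi)).trans hμ1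
  have hpos : ∀ i ∈ s, 0 < μ i := fun i hi =>
    hμ2.trans_le (hμ.1 (Fin.mk_le_of_le_val (Nat.succ_le_of_lt (mem_filter.1 hi).2)))
  have hdeg : ∑ v, (G.degree v : ℝ) = 2 * m := by
    rw [← Nat.cast_sum, G.sum_degrees_eq_twice_card_edges]
    push_cast
    rfl
  have hsum : ∑ i ∈ s, μ i = 2 * m := by
    rw [hμ.sum_filter_pos hμ0 (f := fun t => t) rfl, sum_lapEigsUnordered, hdeg]
  have hsum_sq : ∑ i ∈ s, μ i ^ 2 = M := by
    rw [hμ.sum_filter_pos hμ0 (f := fun t => t ^ 2) (zero_pow two_ne_zero),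
      sum_lapEigsUnordered_sq, sum_add_distrib, hdeg, add_comm]
  have hM : 0 < M :=
    hsum_sq ▸ sum_pos (fun i hi => pow_pos (hpos i hi) 2) ⟨⟨1, by omega⟩, by simp [s]⟩
  have hne : ∀ i ∈ s, μ i ≠ 0 := fun i hi => (hpos i hi).ne'
  have hle := pow_four_sum_le_sum_one_div_sq_mul_sum_sq_pow_three hne
  have heq_iff := pow_four_sum_eq_sum_one_div_sq_mul_sum_sq_pow_three_iff hne
  rw [hsum, hsum_sq] at hle heq_iff
  have hn0 : (0 : ℝ) < n := by exact_mod_cast (show 0 < n by omega)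
  rw [ge_iff_le, div_le_iff₀ (pow_pos hM 3), eq_div_iff (pow_pos hM 3).ne',
    hμ.eq_top_iff hG hμ0, ← heq_iff]
  refine ⟨by nlinarith [mul_le_mul_of_nonneg_left hle hn0.le], fun h => ?_, fun h => ?_⟩
  · exact mul_left_cancel₀ hn0.ne' (by linear_combination -h)
  · linear_combination -n * h
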